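/- Let X be a metric space, Ω ⊆ X open and connected, and C ⊆ X closed with C ∩ Ω ≠ ∅ and Ω not contained in C. Then the boundary of C intersects Ω, and the set Ω' = {x ∈ Ω \ C : dist(x, C) < dist(x, ∂Ω)} is a nonempty open subset of Ω. -/

import Mathlib

/-!
Since `Ω` is connected and meets both `C` and its complement, it meets `∂C` at some point `y`.
As `y ∈ C` lies in the open set `Ω` at positive distance `r` from `∂Ω`, any point `x ∉ C` of `Ω`
within `r / 2` of `y` satisfies `dist(x, C) < r / 2 ≤ dist(x, ∂Ω)`; such points exist because
`y ∈ ∂C`.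
-/

open Set Filter Topology Metric

theorem IsPreconnected.inter_frontier_nonempty {X : Type*} [TopologicalSpace X] {s t : Set X}
    (hs : IsPreconnected s) (hst : (s ∩ t).Nonempty) (hs_not : (s \ t).Nonempty) :
    (s ∩ frontier t).Nonempty := by
  by_contra h
  have closure_sub : closure t ∩ s ⊆ interior t := fun x ⟨hxt, hxs⟩ => by
    by_contra hxi
    exact h ⟨x, hxs, hxt, hxi⟩
  obtain ⟨x, hxs, hxt⟩ := hst
  have hs_int : s ⊆ interior t :=
    hs.subset_of_closure_inter_subset isOpen_interior
      ⟨x, hxs, closure_sub ⟨subset_closure hxt, hxs⟩⟩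
      ((inter_subset_inter_left s (closure_mono interior_subset)).trans closure_sub)
  obtain ⟨z, hzs, hzt⟩ := hs_not
  exact hzt (interior_subset (hs_int hzs))

theorem exists_mem_diff_infEDist_lt {X : Type*} [PseudoEMetricSpace X] {C F U : Set X} {y : X}
    (hyC : y ∈ C) (hy : y ∈ closure Cᶜ) (hU : U ∈ 𝓝 y) (hF : 0 < infEDist y F) :
    ∃ x ∈ U \ C, infEDist x C < infEDist x F := by
  set r := infEDist y F
  have hr : 0 < r / 2 := ENNReal.half_pos hF.ne'
  obtain ⟨x, ⟨hxU, hxy⟩, hxC⟩ :=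
    mem_closure_iff_nhds.mp hy _ (inter_mem hU (eball_mem_nhds y hr))
  have hxy : edist x y < r / 2 := hxy
  refine ⟨x, ⟨hxU, hxC⟩, (infEDist_le_edist_of_mem hyC).trans_lt (hxy.trans_le ?_)⟩
  by_contra! hxF
  have : r < r := calc
    r ≤ infEDist x F + edist y x := infEDist_le_infEDist_add_edist
    _ < r / 2 + r / 2 := ENNReal.add_lt_add hxF (by rwa [edist_comm])
    _ = r := ENNReal.add_halves r
  exact this.false

theorem IsOpen.infEDist_frontier_pos {X : Type*} [PseudoEMetricSpace X] {Ω : Set X}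
    (hΩ : IsOpen Ω) {y : X} (hy : y ∈ Ω) : 0 < infEDist y (frontier Ω) := by
  rw [infEDist_pos_iff_notMem_closure, isClosed_frontier.closure_eq, hΩ.frontier_eq]
  exact fun h => h.2 hy

theorem stmt11 {X : Type*} [MetricSpace X]
    (Ω : Set X) (hΩo : IsOpen Ω) (hΩc : IsConnected Ω)
    (C : Set X) (hC : IsClosed C) (hne : (C ∩ Ω).Nonempty) (hns : ¬ Ω ⊆ C)
    (Ω' : Set X)
    (hΩ' : Ω' = {x | x ∈ Ω \ C ∧
      EMetric.infEdist x C < EMetric.infEdist x (frontier Ω)}) :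
    (frontier C ∩ Ω).Nonempty ∧ Ω'.Nonempty ∧ IsOpen Ω' ∧ Ω' ⊆ Ω := by
  subst hΩ'
  obtain ⟨y, hyΩ, hyC⟩ :=
    hΩc.isPreconnected.inter_frontier_nonempty (inter_comm C Ω ▸ hne) (not_subset.mp hns)
  have hy_closure : y ∈ closure Cᶜ := by
    rw [closure_compl]
    exact hyC.2
  refine ⟨⟨y, hyC, hyΩ⟩, ?_, ?_, fun x hx => hx.1.1⟩
  · exact exists_mem_diff_infEDist_lt (hC.frontier_subset hyC) hy_closure
      (hΩo.mem_nhds hyΩ) (hΩo.infEDist_frontier_pos hyΩ)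
  · exact (hΩo.sdiff hC).inter (isOpen_lt continuous_infEDist continuous_infEDist)
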